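/- For every real t, every integer n with 1 ≤ n ≤ m, and every (n′,r′) ∈ S_m, the sum over r from 0 to n of the matrix-exponential entries exp(tQ)_{(n,r),(n′,r′)} equals exp(tG)_{n,n′}. (Marginalizing the allele count out of exp(tQ) recovers Tavaré's lineage-count transition matrix exp(tG); in particular the sum is independent of r′.) -/

import Mathlib

/-!
Let `L` be the `0/1` matrix that sums the rows of `S_m` lying over the same lineage count `n`.
Summing a column `(n', r')` of `Q` over a level gives the entry of `G`: the two mutation terms
into `(n', r')` cancel the mutation part of its diagonal entry, and the two coalescence terms
from level `n' + 1` add up to `(n' + 1)n'/θ`. Hence `L Q = G L`, so `L Q^k = G^k L` for all `k`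
and `L exp(tQ) = exp(tG) L`.
-/

open Finset

/-- The state space `S_m = {(n,r) : 1 ≤ n ≤ m, 0 ≤ r ≤ n}`, realised as a subtype of
`Fin (m+1) × Fin (m+1)` (first coordinate `n`, second coordinate `r`). -/
abbrev SmIdx (m : ℕ) := {p : Fin (m + 1) × Fin (m + 1) // 1 ≤ (p.1 : ℕ) ∧ (p.2 : ℕ) ≤ (p.1 : ℕ)}

/-- The entry of the matrix `Q` in row `(n,r)` and column `(n',r')`:
`Q_{(n,r),(n,r-1)} = (n-r+1)v`, `Q_{(n,r),(n,r+1)} = (r+1)u`,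
`Q_{(n,r),(n-1,r)} = (n-1-r)n/θ`, `Q_{(n,r),(n-1,r-1)} = (r-1)n/θ`,
`Q_{(n,r),(n,r)} = -n(n-1)/θ - (n-r)v - ru`, and all other entries zero. -/
noncomputable def QEnt (θ u v : ℝ) (n r n' r' : ℕ) : ℝ :=
  if n' = n ∧ r' + 1 = r then ((n : ℝ) - (r : ℝ) + 1) * v
  else if n' = n ∧ r' = r + 1 then ((r : ℝ) + 1) * u
  else if n' + 1 = n ∧ r' = r then ((n : ℝ) - 1 - (r : ℝ)) * (n : ℝ) / θ
  else if n' + 1 = n ∧ r' + 1 = r then ((r : ℝ) - 1) * (n : ℝ) / θ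
  else if n' = n ∧ r' = r then
    -((n : ℝ) * ((n : ℝ) - 1) / θ) - ((n : ℝ) - (r : ℝ)) * v - (r : ℝ) * u
  else 0

/-- The matrix `Q`, rows and columns indexed by `S_m`. -/
noncomputable def coalQ (m : ℕ) (θ u v : ℝ) : Matrix (SmIdx m) (SmIdx m) ℝ :=
  fun p q => QEnt θ u v (p.1.1 : ℕ) (p.1.2 : ℕ) (q.1.1 : ℕ) (q.1.2 : ℕ)

/-- The index set `{1, …, m}`, realised as a subtype of `Fin (m + 1)`. -/
abbrev CoalIdx (m : ℕ) := {i : Fin (m + 1) // 1 ≤ (i : ℕ)}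

/-- The generator `G` of the pure-death coalescent lineage-count chain on `{1, …, m}`:
`G n n = -n(n-1)/θ`, `G n (n-1) = n(n-1)/θ`, and all other entries zero. -/
noncomputable def coalG (m : ℕ) (θ : ℝ) : Matrix (CoalIdx m) (CoalIdx m) ℝ :=
  fun i j =>
    if (j.1 : ℕ) + 1 = (i.1 : ℕ) then
      ((i.1 : ℕ) : ℝ) * (((i.1 : ℕ) : ℝ) - 1) / θ
    else if (j.1 : ℕ) = (i.1 : ℕ) then
      -(((i.1 : ℕ) : ℝ) * (((i.1 : ℕ) : ℝ) - 1) / θ)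
    else 0

open NormedSpace

section Lumping

variable {ι κ ν R : Type*} [DecidableEq κ] [Semiring R]

variable (R) in
def lumpMatrix (π : ι → κ) : Matrix κ ι R :=
  Matrix.of fun k i => if π i = k then 1 else 0

variable {π : ι → κ}

theorem lumpMatrix_mul_apply [Fintype ι] (X : Matrix ι ν R) (k : κ) (j : ν) :
    (lumpMatrix R π * X) k j = ∑ i ∈ univ.filter (π · = k), X i j := by
  simp [lumpMatrix, Matrix.mul_apply, ite_mul, Finset.sum_filter]

theorem mul_lumpMatrix_apply [Fintype κ] (Y : Matrix ν κ R) (k : ν) (j : ι) :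
    (Y * lumpMatrix R π) k j = Y k (π j) := by
  simp [lumpMatrix, Matrix.mul_apply]

end Lumping

section Exponential

variable {ι κ 𝕂 : Type*} [Fintype ι] [DecidableEq ι] [Fintype κ] [DecidableEq κ] [RCLike 𝕂]

theorem Matrix.hasSum_expSeries (A : Matrix ι ι 𝕂) :
    HasSum (fun k => (k.factorial⁻¹ : 𝕂) • A ^ k) (exp A) := by
  -- any operator norm on matrices induces the product topology in which `exp` is defined
  open scoped Matrix.Norms.Operator in
  exact exp_series_hasSum_exp' A

theorem Matrix.mul_exp_eq_exp_mul_of_mul_eq {L : Matrix κ ι 𝕂} {A : Matrix ι ι 𝕂}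
    {B : Matrix κ κ 𝕂} (h : L * A = B * L) : L * exp A = exp B * L := by
  have hpow (k : ℕ) : L * A ^ k = B ^ k * L := by
    induction k with
    | zero => simp
    | succ k ih =>
      rw [pow_succ, ← Matrix.mul_assoc, ih, Matrix.mul_assoc, h, ← Matrix.mul_assoc, ← pow_succ]
  have hA := A.hasSum_expSeries.map (AddMonoidHom.mk' (L * ·) (Matrix.mul_add L))
    (continuous_const.matrix_mul continuous_id)
  have hB := B.hasSum_expSeries.map (AddMonoidHom.mk' (· * L) (fun X Y => Matrix.add_mul X Y L))
    (continuous_id.matrix_mul continuous_const)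
  refine hA.unique ?_
  simpa [Function.comp_def, Matrix.mul_smul, Matrix.smul_mul, hpow] using hB

theorem sum_fiber_exp_apply {π : ι → κ} {A : Matrix ι ι 𝕂} {B : Matrix κ κ 𝕂}
    (h : ∀ k j, ∑ i ∈ univ.filter (π · = k), A i j = B k (π j)) (k : κ) (j : ι) :
    ∑ i ∈ univ.filter (π · = k), exp A i j = exp B k (π j) := by
  have hL : lumpMatrix 𝕂 π * A = B * lumpMatrix 𝕂 π := by
    ext k j
    rw [lumpMatrix_mul_apply, mul_lumpMatrix_apply, h]
  have := congrFun₂ (Matrix.mul_exp_eq_exp_mul_of_mul_eq hL) k j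
  rwa [lumpMatrix_mul_apply, mul_lumpMatrix_apply] at this

end Exponential

def lineageCount {m : ℕ} (p : SmIdx m) : CoalIdx m := ⟨p.1.1, p.2.1⟩

theorem sum_fiber_lineageCount {m : ℕ} (f : ℕ → ℕ → ℝ) (k : CoalIdx m) :
    ∑ p ∈ univ.filter (lineageCount · = k), f p.1.1 p.1.2 = ∑ r ∈ range (k.1 + 1), f k.1 r := by
  refine Finset.sum_nbij' (fun p => p.1.2) (fun r => ⟨(k.1, ⟨min r k.1, by omega⟩), k.2, by simp⟩)
    ?_ ?_ ?_ ?_ ?_ <;> intro p hp <;>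
    simp_all [lineageCount, Subtype.ext_iff, Fin.ext_iff, Prod.ext_iff]
  all_goals exact Fin.le_def.2 (hp ▸ p.2.2)

theorem QEnt_same_level (θ u v : ℝ) (n r r' : ℕ) :
    QEnt θ u v n r n r' =
      (if r = r' then -((n : ℝ) * (n - 1) / θ) - (n - r') * v - r' * u else 0) +
      (if r = r' + 1 then (n - r') * v else 0) + (if r + 1 = r' then r' * u else 0) := by
  simp only [QEnt, true_and]
  split_ifs <;> first | omega | (subst_vars; push_cast; ring)

theorem QEnt_level_below (θ u v : ℝ) (n r r' : ℕ) :
    QEnt θ u v (n + 1) r n r' =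
      (if r = r' then (n - r') * (n + 1) / θ else 0) +
      (if r = r' + 1 then r' * (n + 1) / θ else 0) := by
  simp only [QEnt, true_and]
  split_ifs <;> first | omega | (subst_vars; push_cast; ring)

theorem sum_range_QEnt (θ u v : ℝ) {n n' r' : ℕ} (hr' : r' ≤ n') :
    ∑ r ∈ range (n + 1), QEnt θ u v n r n' r' =
      if n' + 1 = n then (n : ℝ) * (n - 1) / θ
      else if n' = n then -((n : ℝ) * (n - 1) / θ) else 0 := by
  obtain rfl | hn := eq_or_ne n' n
  · rw [if_neg (by omega), if_pos rfl]
    have hu : ∑ r ∈ range (n' + 1), (if r + 1 = r' then (r' : ℝ) * u else 0) = r' * u := by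
      rcases r' with _ | s
      · simp
      · simp [show s < n' + 1 by omega]
    have hv : (if r' + 1 < n' + 1 then ((n' : ℝ) - r') * v else 0) = (n' - r') * v := by
      split_ifs
      · rfl
      · simp [show r' = n' by omega]
    simp only [QEnt_same_level, sum_add_distrib, sum_ite_eq', mem_range, hu, hv,
      if_pos (show r' < n' + 1 by omega)]
    ring
  obtain rfl | hn' := eq_or_ne (n' + 1) n
  · simp only [QEnt_level_below, sum_add_distrib, sum_ite_eq', mem_range,
      if_pos (show r' < n' + 1 + 1 by omega), if_pos (show r' + 1 < n' + 1 + 1 by omega)]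
    push_cast
    ring
  · simp [QEnt, hn, hn']

theorem sum_fiber_coalQ (m : ℕ) (θ u v : ℝ) (k : CoalIdx m) (q : SmIdx m) :
    ∑ p ∈ univ.filter (lineageCount · = k), coalQ m θ u v p q = coalG m θ k (lineageCount q) :=
  (sum_fiber_lineageCount (fun n r => QEnt θ u v n r q.1.1 q.1.2) k).trans
    (sum_range_QEnt θ u v q.2.2)

theorem stmt3_general (m : ℕ) (θ u v : ℝ)
    (t : ℝ) (n : ℕ) (hn : 1 ≤ n) (hnm : n ≤ m) (q : SmIdx m) :
    ∑ p ∈ Finset.univ.filter (fun p : SmIdx m => (p.1.1 : ℕ) = n),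
        NormedSpace.exp (t • coalQ m θ u v) p q =
      NormedSpace.exp (t • coalG m θ) ⟨⟨n, Nat.lt_succ_of_le hnm⟩, hn⟩ ⟨q.1.1, q.2.1⟩ := by
  have hfiber : univ.filter (fun p : SmIdx m => (p.1.1 : ℕ) = n) =
      univ.filter (lineageCount · = ⟨⟨n, Nat.lt_succ_of_le hnm⟩, hn⟩) := by
    simp [lineageCount, Subtype.ext_iff, Fin.ext_iff]
  rw [hfiber]
  refine sum_fiber_exp_apply (fun k j => ?_) _ q
  simp only [Matrix.smul_apply, smul_eq_mul, ← mul_sum, sum_fiber_coalQ]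

/-- Marginalizing the allele count out of `exp (t Q)` recovers Tavaré's lineage-count transition
matrix `exp (t G)`: for every real `t`, every `n` with `1 ≤ n ≤ m`, and every `(n',r') ∈ S_m`,
`∑_{r=0}^{n} exp(tQ)_{(n,r),(n',r')} = exp(tG)_{n,n'}`. -/
theorem stmt3 (m : ℕ) (hm : 1 ≤ m) (θ u v : ℝ) (hθ : 0 < θ) (hu : 0 ≤ u) (hv : 0 ≤ v)
    (t : ℝ) (n : ℕ) (hn : 1 ≤ n) (hnm : n ≤ m) (q : SmIdx m) :
    ∑ p ∈ Finset.univ.filter (fun p : SmIdx m => (p.1.1 : ℕ) = n),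
        NormedSpace.exp (t • coalQ m θ u v) p q =
      NormedSpace.exp (t • coalG m θ) ⟨⟨n, Nat.lt_succ_of_le hnm⟩, hn⟩ ⟨q.1.1, q.2.1⟩ :=
  stmt3_general m θ u v t n hn hnm q
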